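/- Let V, H be Hilbert spaces, C : V → H bounded linear, y^δ ∈ H, a(·,·;q) continuous and coercive with constant ā_q > 0, u ∈ V the exact state (a(u,v;q) = ℓ(v) ∀v ∈ V), u_r ∈ V_r the reduced state, p_r ∈ V_r the reduced adjoint (a(v, p_r; q) = −⟨C*(C u_r − y^δ), v⟩ for all v ∈ V_r). Define Ĵ(q) = ½‖C u − y^δ‖², Ĵ_r(q) = ½‖C u_r − y^δ‖², the dual residual r_du(u_r, p_r; q)[v] = −⟨C*(C u_r − y^δ), v⟩ − a(v, p_r; q), and Δ_pr(q) = (1/ā_q)‖r_pr(u_r;q)‖_{V'}. Then |Ĵ(q) − Ĵ_r(q)| ≤ (‖C‖²/2) Δ_pr(q)² + ‖r_du(u_r, p_r; q)‖_{V'} Δ_pr(q). -/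

import Mathlib

/-- A posteriori error estimate for the reduced discrepancy functional
(Proposition 3.6): with `Δ_pr = (1/ā_q)‖r_pr(u_r)‖_{V'}` and the dual residual
`r_du(u_r,p_r)[v] = −⟪C*(Cu_r − y^δ), v⟫ − a(v, p_r)`, one has
`|Ĵ(q) − Ĵ_r(q)| ≤ (‖C‖²/2) Δ_pr² + ‖r_du‖_{V'} Δ_pr`. -/
theorem stmt_11
    {V H : Type*} [NormedAddCommGroup V] [InnerProductSpace ℝ V] [CompleteSpace V]
    [NormedAddCommGroup H] [InnerProductSpace ℝ H] [CompleteSpace H]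
    (C : V →L[ℝ] H) (yδ : H)
    (Vr : Submodule ℝ V) [FiniteDimensional ℝ Vr]
    (a : V →L[ℝ] V →L[ℝ] ℝ) (αq : ℝ) (hαq : 0 < αq)
    (hcoer : ∀ v : V, αq * ‖v‖ ^ 2 ≤ a v v)
    (ℓ : V →L[ℝ] ℝ)
    -- exact state
    (u : V) (hu : ∀ v : V, a u v = ℓ v)
    -- reduced state
    (ur : V) (hur_mem : ur ∈ Vr) (hur : ∀ v ∈ Vr, a ur v = ℓ v)
    -- reduced adjoint state
    (pr : V) (hpr_mem : pr ∈ Vr)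
    (hpr : ∀ v ∈ Vr,
      a v pr = -(inner ℝ (ContinuousLinearMap.adjoint C (C ur - yδ)) v : ℝ))
    -- discrepancies, primal error bound and dual residual
    (J Jr Δpr : ℝ)
    (hJ : J = (1 / 2) * ‖C u - yδ‖ ^ 2)
    (hJr : Jr = (1 / 2) * ‖C ur - yδ‖ ^ 2)
    (hΔpr : Δpr = (1 / αq) * ‖ℓ - a ur‖)
    (rdu : V →L[ℝ] ℝ)
    (hrdu : rdu =
      -(innerSL ℝ (ContinuousLinearMap.adjoint C (C ur - yδ))) - a.flip pr) :
    |J - Jr| ≤ (‖C‖ ^ 2 / 2) * Δpr ^ 2 + ‖rdu‖ * Δpr := by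
  obtain ⟨e, he_def⟩ : ∃ e : V, e = u - ur := ⟨u - ur, rfl⟩
  have hΔpr_nonneg : 0 ≤ Δpr := by rw [hΔpr]; positivity
  -- the primal residual applied to v equals a e v
  have hres : ∀ v : V, (ℓ - a ur) v = a e v := by
    intro v
    simp [he_def, ← hu v, ContinuousLinearMap.sub_apply]
  -- primal error bound
  have he : ‖e‖ ≤ Δpr := by
    rcases eq_or_lt_of_le (norm_nonneg e) with h0 | hpos
    · rw [← h0]; exact hΔpr_nonneg
    · have h1 : αq * ‖e‖ ^ 2 ≤ a e e := hcoer e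
      have h2 : a e e ≤ ‖ℓ - a ur‖ * ‖e‖ := by
        rw [← hres e]
        exact le_trans (le_abs_self _) ((ℓ - a ur).le_opNorm e)
      have key : αq * ‖e‖ ≤ ‖ℓ - a ur‖ := by nlinarith
      rw [hΔpr]
      have : ‖e‖ = (1 / αq) * (αq * ‖e‖) := by field_simp
      rw [this]
      exact mul_le_mul_of_nonneg_left key (by positivity)
  -- the key identity
  have haepr : a e pr = 0 := by
    have h1 : a u pr = ℓ pr := hu pr
    have h2 : a ur pr = ℓ pr := hur pr hpr_mem
    simp [he_def, map_sub, h1, h2, ContinuousLinearMap.sub_apply]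
  have hrdue : rdu e = -(inner ℝ (ContinuousLinearMap.adjoint C (C ur - yδ)) e : ℝ) := by
    rw [hrdu, ContinuousLinearMap.sub_apply, ContinuousLinearMap.neg_apply,
      innerSL_apply_apply, ContinuousLinearMap.flip_apply, haepr]
    ring
  have hadj : (inner ℝ (ContinuousLinearMap.adjoint C (C ur - yδ)) e : ℝ)
      = inner ℝ (C ur - yδ) (C e) :=
    ContinuousLinearMap.adjoint_inner_left C e (C ur - yδ)
  have hsplit : C u - yδ = (C ur - yδ) + C e := by
    rw [he_def, map_sub]; abel
  have hnorm : ‖C u - yδ‖ ^ 2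
      = ‖C ur - yδ‖ ^ 2 + 2 * (inner ℝ (C ur - yδ) (C e) : ℝ) + ‖C e‖ ^ 2 := by
    rw [hsplit]; exact norm_add_sq_real _ _
  have hJdiff : J - Jr = -(rdu e) + (1 / 2) * ‖C e‖ ^ 2 := by
    rw [hJ, hJr, hnorm, hrdue, hadj]; ring
  -- final estimates
  have hCe : ‖C e‖ ≤ ‖C‖ * Δpr :=
    le_trans (C.le_opNorm e) (mul_le_mul_of_nonneg_left he (norm_nonneg C))
  have habs : |J - Jr| ≤ |rdu e| + (1 / 2) * ‖C e‖ ^ 2 := by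
    rw [hJdiff]
    calc |(-(rdu e) + (1 / 2) * ‖C e‖ ^ 2)|
        ≤ |(-(rdu e))| + |(1 / 2) * ‖C e‖ ^ 2| := abs_add_le _ _
      _ = |rdu e| + (1 / 2) * ‖C e‖ ^ 2 := by
          rw [abs_neg]
          congr 1
          exact abs_of_nonneg (by positivity)
  have hrdub : |rdu e| ≤ ‖rdu‖ * Δpr := by
    calc |rdu e| = ‖rdu e‖ := rfl
      _ ≤ ‖rdu‖ * ‖e‖ := rdu.le_opNorm e
      _ ≤ ‖rdu‖ * Δpr := mul_le_mul_of_nonneg_left he (norm_nonneg rdu)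
  have hCe2 : (1 / 2) * ‖C e‖ ^ 2 ≤ (‖C‖ ^ 2 / 2) * Δpr ^ 2 := by
    have h2 : ‖C e‖ ^ 2 ≤ (‖C‖ * Δpr) ^ 2 := pow_le_pow_left₀ (norm_nonneg _) hCe 2
    calc (1 / 2) * ‖C e‖ ^ 2 ≤ (1 / 2) * (‖C‖ * Δpr) ^ 2 :=
          mul_le_mul_of_nonneg_left h2 (by norm_num)
      _ = (‖C‖ ^ 2 / 2) * Δpr ^ 2 := by ring
  exact habs.trans ((add_le_add hrdub hCe2).trans (le_of_eq (add_comm _ _)))
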